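/- For every ε > 0, the ratio (∫_{(𝔞⁺)_{T+ε}} ξ(t) dt) / (∫_{(𝔞⁺)_T} ξ(t) dt) tends to e^{δε} as T → ∞. (Coordinate form of the paper's Lemma 5.4 on the volume growth of Riemannian balls, via the Cartan integration formula.) -/

import Mathlib

/-!
Write `F T` for the integral of `ξ` over `(𝔞⁺)_T`. Translating by `a • v` maps `(𝔞⁺)_T` into
`(𝔞⁺)_{T+a}` and multiplies `ξ` by at least `e^{δ a}`, since `sinh (x + c) ≥ e^c sinh x`; hence
`F (T + ε) ≥ e^{δ ε} F T` and `F T ≥ c e^{δ T}`.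

For the upper bound, dilate by `k = (T + ε) / T`, which maps `(𝔞⁺)_T` onto `(𝔞⁺)_{T+ε}`.
At points where every root is at least `A`, `sinh (k x) ≤ e^{(k-1) x} sinh x / (1 - e^{-2A})`
gives `ξ (k y) ≤ e^{δ ε} ξ y / (1 - e^{-2A})^M` with `M = ∑ m_i`, because
`2ρ y ≤ δ ‖y‖ ≤ δ T`. Near a wall the direction of `y` stays in a compact set avoiding the
barycenter, so `2ρ y ≤ β ‖y‖ + D` with `β < δ`, and this region contributes
`O(T^r e^{β T}) = o(F T)`. Letting `A → ∞` gives `limsup F (T + ε) / F T ≤ e^{δ ε}`.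
-/

open MeasureTheory Real Filter Set Topology Module
open scoped Pointwise

namespace Real

lemma sinh_le_exp_div_two (x : ℝ) : sinh x ≤ exp x / 2 := by
  rw [sinh_eq]
  linarith [exp_pos (-x)]

lemma exp_mul_sinh_le_sinh_add (x : ℝ) {c : ℝ} (hc : 0 ≤ c) :
    exp c * sinh x ≤ sinh (x + c) := by
  rw [sinh_add, ← cosh_add_sinh c]
  nlinarith [sinh_lt_cosh x, sinh_nonneg_iff.2 hc]

lemma one_sub_exp_mul_sinh_mul_le {A x : ℝ} (hA : 0 ≤ A) (hx : A ≤ x) (k : ℝ) :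
    (1 - exp (-(2 * A))) * sinh (k * x) ≤ exp ((k - 1) * x) * sinh x := by
  have hA' : 0 ≤ 1 - exp (-(2 * A)) := by
    rw [sub_nonneg, exp_le_one_iff]; linarith
  calc (1 - exp (-(2 * A))) * sinh (k * x)
      ≤ (1 - exp (-(2 * A))) * (exp (k * x) / 2) :=
        mul_le_mul_of_nonneg_left (sinh_le_exp_div_two _) hA'
    _ ≤ (1 - exp (-(2 * x))) * (exp (k * x) / 2) := by
        gcongr
    _ = exp ((k - 1) * x) * sinh x := by
        rw [sinh_eq, exp_neg, exp_neg, show (k - 1) * x = k * x - x by ring, exp_sub,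
          show 2 * x = x + x by ring, exp_add]
        field_simp

end Real

lemma IsCompact.exists_lt_forall_le {X : Type*} [TopologicalSpace X] {K : Set X}
    (hK : IsCompact K) {f : X → ℝ} (hf : ContinuousOn f K) {δ : ℝ} (hlt : ∀ x ∈ K, f x < δ) :
    ∃ β < δ, ∀ x ∈ K, f x ≤ β := by
  rcases K.eq_empty_or_nonempty with rfl | hne
  · exact ⟨δ - 1, by linarith, by simp⟩
  · obtain ⟨x₀, hx₀, hmax⟩ := hK.exists_isMaxOn hne hf
    exact ⟨f x₀, hlt x₀ hx₀, fun x hx => hmax hx⟩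

lemma tendsto_div_of_eventually_le {X : Type*} {l : Filter X} {F G : X → ℝ} {L : ℝ}
    (hG : ∀ᶠ x in l, 0 < G x) (hge : ∀ᶠ x in l, L * G x ≤ F x)
    (hle : ∀ b > L, ∀ᶠ x in l, F x ≤ b * G x) :
    Tendsto (fun x => F x / G x) l (𝓝 L) := by
  refine tendsto_order.2 ⟨fun b hb => ?_, fun b hb => ?_⟩
  · filter_upwards [hG, hge] with x hGx hx
    exact hb.trans_le ((le_div_iff₀ hGx).2 hx)
  · obtain ⟨b', hLb', hb'b⟩ := exists_between hb
    filter_upwards [hG, hle b' hLb'] with x hGx hx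
    exact ((div_le_iff₀ hGx).2 hx).trans_lt hb'b

lemma tendsto_pow_mul_exp_neg_mul_atTop_nhds_zero (d : ℕ) {a : ℝ} (ha : 0 < a) :
    Tendsto (fun T : ℝ => T ^ d * exp (-(a * T))) atTop (𝓝 0) := by
  simpa [rpow_natCast, neg_mul] using tendsto_rpow_mul_exp_neg_mul_atTop_nhds_zero d a ha

lemma eventually_le_mul_of_le_pow_mul_add {F : ℝ → ℝ} {p c δ β ε L C b : ℝ} (d : ℕ)
    (hp : 0 < p) (hc : 0 < c) (hε : 0 ≤ ε) (hC : 0 ≤ C) (hβ : β < δ)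
    (hlow : ∀ᶠ T in atTop, c * exp (δ * T) ≤ F T)
    (hup : ∀ᶠ T in atTop,
      p * F (T + ε) ≤ ((T + ε) / T) ^ d * (L * F T + C * (T ^ d * exp (β * T))))
    (hb : L < p * b) :
    ∀ᶠ T in atTop, F (T + ε) ≤ b * F T := by
  have hlim : Tendsto (fun T : ℝ => ((T + ε) / T) ^ d *
      (L + C / c * (T ^ d * exp (-((δ - β) * T))))) atTop (𝓝 L) := by
    have hk : Tendsto (fun T : ℝ => (T + ε) / T) atTop (𝓝 1) := by
      have h : Tendsto (fun T : ℝ => 1 + ε / T) atTop (𝓝 1) := by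
        simpa using tendsto_const_nhds.add (tendsto_const_nhds.div_atTop (tendsto_id (α := ℝ)))
      refine h.congr' ?_
      filter_upwards [eventually_gt_atTop 0] with T hT
      field_simp
    simpa using (hk.pow d).mul (tendsto_const_nhds.add
      ((tendsto_pow_mul_exp_neg_mul_atTop_nhds_zero d (sub_pos.2 hβ)).const_mul (C / c)))
  filter_upwards [hlim.eventually (gt_mem_nhds hb), hlow, hup, eventually_gt_atTop 0]
    with T hlt hlowT hupT hT
  have hF : 0 < F T := (by positivity : 0 < c * exp (δ * T)).trans_le hlowT
  have herr : C * (T ^ d * exp (β * T)) ≤ C / c * (T ^ d * exp (-((δ - β) * T))) * F T :=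
    calc C * (T ^ d * exp (β * T))
        = C / c * (T ^ d * exp (-((δ - β) * T))) * (c * exp (δ * T)) := by
          rw [show β * T = -((δ - β) * T) + δ * T by ring, exp_add]
          field_simp
      _ ≤ C / c * (T ^ d * exp (-((δ - β) * T))) * F T := by gcongr
  refine le_of_mul_le_mul_left ?_ hp
  calc p * F (T + ε) ≤ ((T + ε) / T) ^ d * (L * F T + C * (T ^ d * exp (β * T))) := hupT
    _ ≤ ((T + ε) / T) ^ d * (L + C / c * (T ^ d * exp (-((δ - β) * T)))) * F T := by
        rw [mul_assoc, add_mul]; gcongr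
    _ ≤ p * b * F T := mul_le_mul_of_nonneg_right hlt.le hF.le
    _ = p * (b * F T) := mul_assoc _ _ _

lemma LinearMap.le_mul_norm_of_forall_norm_le_one {E : Type*} [NormedAddCommGroup E]
    [NormedSpace ℝ E] (f : E →ₗ[ℝ] ℝ) {δ : ℝ} (hf : ∀ t, ‖t‖ ≤ 1 → f t ≤ δ) (t : E) :
    f t ≤ δ * ‖t‖ := by
  rcases eq_or_ne t 0 with rfl | ht
  · simp
  · have hnorm : 0 < ‖t‖ := norm_pos_iff.2 ht
    have := hf (‖t‖⁻¹ • t) (by rw [norm_smul, norm_inv, norm_norm, inv_mul_cancel₀ hnorm.ne'])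
    rw [map_smul, smul_eq_mul, inv_mul_le_iff₀ hnorm] at this
    linarith

section Chamber

variable {E : Type*} [NormedAddCommGroup E] [NormedSpace ℝ E] {ι : Type*}

def chamber (α : ι → E →ₗ[ℝ] ℝ) : Set E := {t | ∀ i, 0 ≤ α i t}

def truncChamber (α : ι → E →ₗ[ℝ] ℝ) (T : ℝ) : Set E := {t ∈ chamber α | ‖t‖ < T}

variable {α : ι → E →ₗ[ℝ] ℝ}

lemma smul_mem_chamber {t : E} (ht : t ∈ chamber α) {k : ℝ} (hk : 0 ≤ k) :
    k • t ∈ chamber α := fun i => by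
  simpa using mul_nonneg hk (ht i)

lemma smul_truncChamber {k : ℝ} (hk : 0 < k) (T : ℝ) :
    k • truncChamber α T = truncChamber α (k * T) := by
  ext t
  rw [mem_smul_set_iff_inv_smul_mem₀ hk.ne']
  simp [truncChamber, chamber, norm_smul, abs_of_pos hk, inv_mul_lt_iff₀ hk,
    mul_nonneg_iff_of_pos_left (inv_pos.2 hk)]

lemma truncChamber_subset_closedBall (T : ℝ) : truncChamber α T ⊆ Metric.closedBall 0 T :=
  fun _ ht => mem_closedBall_zero_iff.2 ht.2.le

variable [FiniteDimensional ℝ E]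

lemma isClosed_chamber : IsClosed (chamber α) := by
  simp only [chamber, ofPred_forall]
  exact isClosed_iInter fun i => isClosed_le continuous_const (α i).continuous_of_finiteDimensional

lemma pos_of_mem_interior_chamber {v : E} (hv : v ∈ interior (chamber α)) {i : ι}
    (hα : α i ≠ 0) : 0 < α i v := by
  refine (interior_subset hv i).lt_of_ne' fun h => hα ?_
  have hmin : IsLocalMin (LinearMap.toContinuousLinearMap (α i)) v := by
    filter_upwards [mem_interior_iff_mem_nhds.1 hv] with t ht
    simpa [h] using ht i
  simpa using hmin.hasFDerivAt_eq_zero (LinearMap.toContinuousLinearMap (α i)).hasFDerivAt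

variable [MeasurableSpace E] [BorelSpace E]

lemma measurableSet_truncChamber (T : ℝ) : MeasurableSet (truncChamber α T) :=
  isClosed_chamber.measurableSet.inter (measurableSet_lt measurable_norm measurable_const)

lemma integrableOn_truncChamber {f : E → ℝ} (hf : Continuous f) (μ : Measure E)
    [IsFiniteMeasureOnCompacts μ] (T : ℝ) : IntegrableOn f (truncChamber α T) μ :=
  (hf.continuousOn.integrableOn_compact (isCompact_closedBall 0 T)).mono_set
    (truncChamber_subset_closedBall T)

lemma measureReal_truncChamber_le (μ : Measure E) [μ.IsAddHaarMeasure] {T : ℝ} (hT : 0 < T) :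
    μ.real (truncChamber α T) ≤ μ.real (Metric.ball 0 1) * T ^ finrank ℝ E := by
  calc μ.real (truncChamber α T) ≤ μ.real (Metric.ball 0 T) :=
        measureReal_mono (fun _ ht => mem_ball_zero_iff.2 ht.2) measure_ball_lt_top.ne
    _ = μ.real (Metric.ball 0 1) * T ^ finrank ℝ E := by
        rw [measureReal_def, Measure.addHaar_ball_of_pos μ 0 hT, ENNReal.toReal_mul,
          ENNReal.toReal_ofReal (by positivity), mul_comm, measureReal_def]

end Chamber

section Density

variable {E : Type*} [NormedAddCommGroup E] [NormedSpace ℝ E] {ι : Type*} [Fintype ι]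

noncomputable def weylDensity (α : ι → E →ₗ[ℝ] ℝ) (m : ι → ℕ) (t : E) : ℝ :=
  ∏ i, sinh (α i t) ^ m i

def twoRho (α : ι → E →ₗ[ℝ] ℝ) (m : ι → ℕ) : E →ₗ[ℝ] ℝ := ∑ i, (m i : ℝ) • α i

variable {α : ι → E →ₗ[ℝ] ℝ} {m : ι → ℕ}

lemma twoRho_apply (t : E) : twoRho α m t = ∑ i, (m i : ℝ) * α i t := by
  simp [twoRho]

lemma exp_mul_twoRho (c : ℝ) (t : E) :
    exp (c * twoRho α m t) = ∏ i, exp (c * α i t) ^ m i := by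
  simp only [twoRho_apply, Finset.mul_sum, exp_sum, ← exp_nat_mul]
  congr! 2
  ring

lemma weylDensity_nonneg {t : E} (ht : t ∈ chamber α) : 0 ≤ weylDensity α m t :=
  Finset.prod_nonneg fun i _ => pow_nonneg (sinh_nonneg_iff.2 (ht i)) _

lemma weylDensity_pos {t : E} (ht : ∀ i, 0 < α i t) : 0 < weylDensity α m t :=
  Finset.prod_pos fun i _ => pow_pos (sinh_pos_iff.2 (ht i)) _

lemma weylDensity_le_exp {t : E} (ht : t ∈ chamber α) :
    weylDensity α m t ≤ exp (twoRho α m t) := by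
  rw [← one_mul (twoRho α m t), exp_mul_twoRho]
  refine Finset.prod_le_prod (fun i _ => pow_nonneg (sinh_nonneg_iff.2 (ht i)) _) fun i _ => ?_
  refine pow_le_pow_left₀ (sinh_nonneg_iff.2 (ht i)) ?_ _
  rw [one_mul]
  linarith [sinh_le_exp_div_two (α i t), exp_pos (α i t)]

lemma exp_mul_weylDensity_le_add_smul {t v : E} (ht : t ∈ chamber α) (hv : v ∈ chamber α)
    {a : ℝ} (ha : 0 ≤ a) :
    exp (a * twoRho α m v) * weylDensity α m t ≤ weylDensity α m (t + a • v) := by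
  rw [exp_mul_twoRho, weylDensity, weylDensity, ← Finset.prod_mul_distrib]
  refine Finset.prod_le_prod (fun i _ => ?_) fun i _ => ?_
  · rw [← mul_pow]
    exact pow_nonneg (mul_nonneg (exp_pos _).le (sinh_nonneg_iff.2 (ht i))) _
  · rw [← mul_pow, map_add, map_smul, smul_eq_mul]
    refine pow_le_pow_left₀ (mul_nonneg (exp_pos _).le (sinh_nonneg_iff.2 (ht i))) ?_ _
    exact exp_mul_sinh_le_sinh_add _ (mul_nonneg ha (hv i))

lemma one_sub_exp_pow_mul_weylDensity_smul_le {A : ℝ} (hA : 0 ≤ A) {y : E}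
    (hy : ∀ i, A ≤ α i y) {k : ℝ} (hk : 0 ≤ k) :
    (1 - exp (-(2 * A))) ^ (∑ i, m i) * weylDensity α m (k • y)
      ≤ exp ((k - 1) * twoRho α m y) * weylDensity α m y := by
  have hA' : 0 ≤ 1 - exp (-(2 * A)) := by
    rw [sub_nonneg, exp_le_one_iff]; linarith
  have hnonneg : ∀ i, 0 ≤ (1 - exp (-(2 * A))) * sinh (k * α i y) := fun i =>
    mul_nonneg hA' (sinh_nonneg_iff.2 (mul_nonneg hk (hA.trans (hy i))))
  rw [exp_mul_twoRho, weylDensity, weylDensity, ← Finset.prod_pow_eq_pow_sum,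
    ← Finset.prod_mul_distrib, ← Finset.prod_mul_distrib]
  refine Finset.prod_le_prod (fun i _ => ?_) fun i _ => ?_
  · rw [← mul_pow, map_smul, smul_eq_mul]
    exact pow_nonneg (hnonneg i) _
  · rw [← mul_pow, ← mul_pow, map_smul, smul_eq_mul]
    exact pow_le_pow_left₀ (hnonneg i) (one_sub_exp_mul_sinh_mul_le hA (hy i) k) _

lemma mul_weylDensity_smul_le {A δ β D T k : ℝ} (hA : 0 ≤ A) (hδ0 : 0 ≤ δ) (hβ : 0 ≤ β)
    (hδ : ∀ t, twoRho α m t ≤ δ * ‖t‖)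
    (hshallow : ∀ y, (∃ i, α i y < A) → twoRho α m y ≤ β * ‖y‖ + D)
    {y : E} (hy : y ∈ truncChamber α T) (hk : 1 ≤ k) :
    (1 - exp (-(2 * A))) ^ (∑ i, m i) * weylDensity α m (k • y)
      ≤ exp ((k - 1) * (δ * T)) * weylDensity α m y + exp (k * (β * T + D)) := by
  have hky : k • y ∈ chamber α := smul_mem_chamber hy.1 (by linarith)
  by_cases hdeep : ∀ i, A ≤ α i y
  · have hρ : twoRho α m y ≤ δ * T := (hδ y).trans (by gcongr; exact hy.2.le)
    calc _ ≤ exp ((k - 1) * twoRho α m y) * weylDensity α m y :=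
          one_sub_exp_pow_mul_weylDensity_smul_le hA hdeep (by linarith)
      _ ≤ exp ((k - 1) * (δ * T)) * weylDensity α m y := by
          have := weylDensity_nonneg (m := m) hy.1
          gcongr
      _ ≤ _ := le_add_of_nonneg_right (exp_pos _).le
  · simp only [not_forall, not_le] at hdeep
    have hρ : twoRho α m y ≤ β * T + D := (hshallow y hdeep).trans (by gcongr; exact hy.2.le)
    have hp1 : (1 - exp (-(2 * A))) ^ (∑ i, m i) ≤ 1 :=
      pow_le_one₀ (by rw [sub_nonneg, exp_le_one_iff]; linarith) (by linarith [exp_pos (-(2 * A))])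
    calc _ ≤ weylDensity α m (k • y) := mul_le_of_le_one_left (weylDensity_nonneg hky) hp1
      _ ≤ exp (k * twoRho α m y) := by
          rw [← smul_eq_mul, ← map_smul]; exact weylDensity_le_exp hky
      _ ≤ exp (k * (β * T + D)) := by gcongr
      _ ≤ _ := le_add_of_nonneg_left (mul_nonneg (exp_pos _).le (weylDensity_nonneg hy.1))

lemma continuous_weylDensity [FiniteDimensional ℝ E] : Continuous (weylDensity α m) :=
  continuous_finsetProd _ fun i _ =>
    (continuous_sinh.comp (α i).continuous_of_finiteDimensional).pow _

end Density

section MaximizingDirection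

variable {E : Type*} [NormedAddCommGroup E] [NormedSpace ℝ E] [FiniteDimensional ℝ E]
  {ι : Type*} [Finite ι] [Nonempty ι] {α : ι → E →ₗ[ℝ] ℝ} (f : E →ₗ[ℝ] ℝ) {v : E} {δ : ℝ}

lemma LinearMap.exists_lt_forall_le_of_exists_le (hαv : ∀ i, 0 < α i v)
    (hmax : ∀ t, ‖t‖ ≤ 1 → f t ≤ δ) (huniq : ∀ t, ‖t‖ ≤ 1 → f t = δ → t = v) :
    ∃ σ > 0, ∃ β, 0 ≤ β ∧ β < δ ∧ ∀ u, ‖u‖ ≤ 1 → (∃ i, α i u ≤ σ) → f u ≤ β := by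
  obtain ⟨σ, hσv, hσ⟩ : ∃ σ, (∀ i, σ < α i v) ∧ 0 < σ :=
    ((eventually_all.2 fun i => (eventually_lt_nhds (hαv i)).filter_mono nhdsWithin_le_nhds).and
      self_mem_nhdsWithin).exists (f := 𝓝[>] (0 : ℝ))
  have hK : IsCompact (Metric.closedBall (0 : E) 1 ∩ ⋃ i, {u | α i u ≤ σ}) :=
    (isCompact_closedBall 0 1).inter_right <| isClosed_iUnion_of_finite fun i =>
      isClosed_le (α i).continuous_of_finiteDimensional continuous_const
  obtain ⟨β, hβδ, hβ⟩ := hK.exists_lt_forall_le f.continuous_of_finiteDimensional.continuousOn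
    fun u ⟨hu, hσu⟩ => by
      rw [mem_closedBall_zero_iff] at hu
      obtain ⟨i, hi⟩ := mem_iUnion.1 hσu
      refine (hmax u hu).lt_of_ne fun h => (hσv i).not_ge ?_
      rwa [huniq u hu h] at hi
  refine ⟨σ, hσ, β, ?_, hβδ, fun u hu hσu => hβ u ⟨mem_closedBall_zero_iff.2 hu, by simpa⟩⟩
  simpa using hβ 0 ⟨by simp, mem_iUnion.2 ⟨Classical.arbitrary ι, by simp [hσ.le]⟩⟩

lemma LinearMap.exists_le_mul_norm_add_of_exists_lt (hαv : ∀ i, 0 < α i v)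
    (hmax : ∀ t, ‖t‖ ≤ 1 → f t ≤ δ) (huniq : ∀ t, ‖t‖ ≤ 1 → f t = δ → t = v)
    {A : ℝ} (hA : 0 ≤ A) :
    ∃ β D, 0 ≤ β ∧ β < δ ∧ 0 ≤ D ∧ ∀ y, (∃ i, α i y < A) → f y ≤ β * ‖y‖ + D := by
  obtain ⟨σ, hσ, β, hβ0, hβδ, hβ⟩ := f.exists_lt_forall_le_of_exists_le hαv hmax huniq
  have hD : 0 ≤ δ * (A / σ) := mul_nonneg (hβ0.trans hβδ.le) (by positivity)
  refine ⟨β, δ * (A / σ), hβ0, hβδ, hD, fun y ⟨i, hi⟩ => ?_⟩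
  rcases le_or_gt ‖y‖ (A / σ) with hsmall | hlarge
  · calc f y ≤ δ * ‖y‖ := f.le_mul_norm_of_forall_norm_le_one hmax y
      _ ≤ δ * (A / σ) := by gcongr; linarith
      _ ≤ β * ‖y‖ + δ * (A / σ) := le_add_of_nonneg_left (by positivity)
  · have hy : 0 < ‖y‖ := (by positivity : 0 ≤ A / σ).trans_lt hlarge
    have hu := hβ (‖y‖⁻¹ • y) (by rw [norm_smul, norm_inv, norm_norm, inv_mul_cancel₀ hy.ne'])
      ⟨i, by
        rw [map_smul, smul_eq_mul, inv_mul_le_iff₀ hy]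
        rw [div_lt_iff₀ hσ] at hlarge
        linarith⟩
    rw [map_smul, smul_eq_mul, inv_mul_le_iff₀ hy] at hu
    linarith

end MaximizingDirection

section Volume

variable {E : Type*} [NormedAddCommGroup E] [NormedSpace ℝ E] [MeasurableSpace E]
  {ι : Type*} [Fintype ι]

noncomputable def ballVolume (μ : Measure E) (α : ι → E →ₗ[ℝ] ℝ) (m : ι → ℕ) (T : ℝ) : ℝ :=
  ∫ t in truncChamber α T, weylDensity α m t ∂μ

variable [FiniteDimensional ℝ E] [BorelSpace E] (μ : Measure E) [μ.IsAddHaarMeasure]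
  {α : ι → E →ₗ[ℝ] ℝ} {m : ι → ℕ}

lemma ballVolume_mul {k : ℝ} (hk : 0 < k) (T : ℝ) :
    ballVolume μ α m (k * T) =
      k ^ finrank ℝ E * ∫ y in truncChamber α T, weylDensity α m (k • y) ∂μ := by
  rw [Measure.setIntegral_comp_smul_of_pos μ _ _ hk, smul_truncChamber hk, smul_eq_mul,
    mul_inv_cancel_left₀ (pow_ne_zero _ hk.ne')]
  rfl

lemma exp_mul_ballVolume_le {v : E} (hv : v ∈ chamber α) (hv1 : ‖v‖ ≤ 1) {a : ℝ} (ha : 0 ≤ a)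
    (T : ℝ) : exp (a * twoRho α m v) * ballVolume μ α m T ≤ ballVolume μ α m (T + a) := by
  have hshift : (· + a • v) '' truncChamber α T ⊆ truncChamber α (T + a) := by
    rintro _ ⟨t, ⟨ht, htT⟩, rfl⟩
    refine ⟨fun i => ?_, ?_⟩
    · simpa using add_nonneg (ht i) (mul_nonneg ha (hv i))
    · calc ‖t + a • v‖ ≤ ‖t‖ + a * ‖v‖ := by
            simpa [norm_smul, abs_of_nonneg ha] using norm_add_le t (a • v)
        _ < T + a := by nlinarith
  calc exp (a * twoRho α m v) * ballVolume μ α m T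
      = ∫ t in truncChamber α T, exp (a * twoRho α m v) * weylDensity α m t ∂μ :=
        (integral_const_mul _ _).symm
    _ ≤ ∫ t in truncChamber α T, weylDensity α m (t + a • v) ∂μ :=
        setIntegral_mono_on ((integrableOn_truncChamber continuous_weylDensity μ T).const_mul _)
          (integrableOn_truncChamber (continuous_weylDensity.comp (continuous_add_const _)) μ T)
          (measurableSet_truncChamber T) fun t ht => exp_mul_weylDensity_le_add_smul ht.1 hv ha
    _ = ∫ t in (· + a • v) '' truncChamber α T, weylDensity α m t ∂μ :=
        ((measurePreserving_add_right μ _).setIntegral_image_emb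
          (measurableEmbedding_addRight _) _ _).symm
    _ ≤ ballVolume μ α m (T + a) :=
        setIntegral_mono_set (integrableOn_truncChamber continuous_weylDensity μ _)
          (ae_restrict_of_forall_mem (measurableSet_truncChamber _) fun t ht =>
            weylDensity_nonneg ht.1)
          hshift.eventuallyLE

lemma exists_ballVolume_pos {v : E} (hv : v ∈ interior (chamber α)) (hαv : ∀ i, 0 < α i v) :
    ∃ T, 0 < ballVolume μ α m T := by
  refine ⟨‖v‖ + 1, ?_⟩
  rw [ballVolume, setIntegral_pos_iff_support_of_nonneg_ae
    (ae_restrict_of_forall_mem (measurableSet_truncChamber _) fun t ht => weylDensity_nonneg ht.1)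
    (integrableOn_truncChamber continuous_weylDensity μ _)]
  have hU : IsOpen
      (Function.support (weylDensity α m) ∩ interior (chamber α) ∩ Metric.ball 0 (‖v‖ + 1)) :=
    (continuous_weylDensity.isOpen_support.inter isOpen_interior).inter Metric.isOpen_ball
  refine (hU.measure_pos μ ⟨v, ⟨(weylDensity_pos hαv).ne', hv⟩, by simp⟩).trans_le
    (measure_mono ?_)
  rintro t ⟨⟨hξ, hint⟩, hball⟩
  exact ⟨hξ, interior_subset hint, mem_ball_zero_iff.1 hball⟩

lemma exists_mul_exp_le_ballVolume {v : E} (hv : v ∈ interior (chamber α)) (hv1 : ‖v‖ ≤ 1)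
    (hαv : ∀ i, 0 < α i v) :
    ∃ c > 0, ∀ᶠ T in atTop, c * exp (twoRho α m v * T) ≤ ballVolume μ α m T := by
  obtain ⟨T₀, hT₀⟩ := exists_ballVolume_pos μ (m := m) hv hαv
  refine ⟨ballVolume μ α m T₀ * exp (-(twoRho α m v * T₀)), by positivity, ?_⟩
  filter_upwards [eventually_ge_atTop T₀] with T hT
  calc _ = exp ((T - T₀) * twoRho α m v) * ballVolume μ α m T₀ := by
        rw [mul_assoc, ← exp_add, mul_comm]; ring_nf
    _ ≤ ballVolume μ α m (T₀ + (T - T₀)) :=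
        exp_mul_ballVolume_le μ (interior_subset hv) hv1 (sub_nonneg.2 hT) T₀
    _ = ballVolume μ α m T := by rw [add_sub_cancel]

lemma mul_setIntegral_weylDensity_smul_le {A δ β D : ℝ} (hA : 0 ≤ A) (hδ0 : 0 ≤ δ) (hβ : 0 ≤ β)
    (hδ : ∀ t, twoRho α m t ≤ δ * ‖t‖)
    (hshallow : ∀ y, (∃ i, α i y < A) → twoRho α m y ≤ β * ‖y‖ + D) {k : ℝ} (hk : 1 ≤ k)
    (T : ℝ) :
    (1 - exp (-(2 * A))) ^ (∑ i, m i) * ∫ y in truncChamber α T, weylDensity α m (k • y) ∂μ ≤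
      exp ((k - 1) * (δ * T)) * ballVolume μ α m T +
        μ.real (truncChamber α T) * exp (k * (β * T + D)) := by
  rw [← integral_const_mul]
  calc ∫ y in truncChamber α T, (1 - exp (-(2 * A))) ^ (∑ i, m i) * weylDensity α m (k • y) ∂μ
      ≤ ∫ y in truncChamber α T,
          (exp ((k - 1) * (δ * T)) * weylDensity α m y + exp (k * (β * T + D))) ∂μ :=
        setIntegral_mono_on
          (integrableOn_truncChamber
            (continuous_const.mul (continuous_weylDensity.comp (continuous_const_smul k))) μ T)
          (integrableOn_truncChamber
            ((continuous_const.mul continuous_weylDensity).add continuous_const) μ T)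
          (measurableSet_truncChamber T)
          fun y hy => mul_weylDensity_smul_le hA hδ0 hβ hδ hshallow hy hk
    _ = _ := by
        rw [integral_add ((integrableOn_truncChamber continuous_weylDensity μ T).const_mul _)
          (integrableOn_truncChamber continuous_const μ T), integral_const_mul, setIntegral_const,
          smul_eq_mul]
        rfl

lemma mul_ballVolume_add_le {A δ β D : ℝ} (hA : 0 ≤ A) (hδ0 : 0 ≤ δ) (hβ : 0 ≤ β) (hD : 0 ≤ D)
    (hδ : ∀ t, twoRho α m t ≤ δ * ‖t‖)
    (hshallow : ∀ y, (∃ i, α i y < A) → twoRho α m y ≤ β * ‖y‖ + D)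
    {ε T : ℝ} (hε : 0 ≤ ε) (hεT : ε ≤ T) (hT : 0 < T) :
    (1 - exp (-(2 * A))) ^ (∑ i, m i) * ballVolume μ α m (T + ε) ≤
      ((T + ε) / T) ^ finrank ℝ E * (exp (δ * ε) * ballVolume μ α m T +
        exp (β * ε + 2 * D) * μ.real (Metric.ball 0 1) * (T ^ finrank ℝ E * exp (β * T))) := by
  set k := (T + ε) / T with hk
  have hkT : k * T = T + ε := div_mul_cancel₀ _ hT.ne'
  have hk1 : 1 ≤ k := by rw [hk, le_div_iff₀ hT]; linarith
  have hk2 : k ≤ 2 := by rw [hk, div_le_iff₀ hT]; linarith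
  have hmain : (k - 1) * (δ * T) = δ * ε := by linear_combination δ * hkT
  have herr : exp (k * (β * T + D)) ≤ exp (β * ε + 2 * D) * exp (β * T) := by
    rw [← exp_add]; gcongr; nlinarith
  rw [← hkT, ballVolume_mul μ (by positivity) T, mul_left_comm]
  refine mul_le_mul_of_nonneg_left ?_ (by positivity)
  refine (mul_setIntegral_weylDensity_smul_le μ hA hδ0 hβ hδ hshallow hk1 T).trans ?_
  rw [hmain]
  refine add_le_add le_rfl ?_
  calc μ.real (truncChamber α T) * exp (k * (β * T + D))
      ≤ μ.real (Metric.ball 0 1) * T ^ finrank ℝ E * (exp (β * ε + 2 * D) * exp (β * T)) :=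
        mul_le_mul (measureReal_truncChamber_le μ hT) herr (exp_pos _).le (by positivity)
    _ = _ := by ring

lemma eventually_ballVolume_add_le_mul [Nonempty ι] {v : E} (hv : v ∈ interior (chamber α))
    (hv1 : ‖v‖ ≤ 1) (hαv : ∀ i, 0 < α i v)
    (hmax : ∀ t, ‖t‖ ≤ 1 → twoRho α m t ≤ twoRho α m v)
    (huniq : ∀ t, ‖t‖ ≤ 1 → twoRho α m t = twoRho α m v → t = v) {ε : ℝ} (hε : 0 < ε)
    {b : ℝ} (hb : exp (twoRho α m v * ε) < b) :
    ∀ᶠ T in atTop, ballVolume μ α m (T + ε) ≤ b * ballVolume μ α m T := by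
  have hp : Tendsto (fun A : ℝ => (1 - exp (-(2 * A))) ^ (∑ i, m i) * b) atTop (𝓝 b) := by
    have h := tendsto_exp_neg_atTop_nhds_zero.comp (tendsto_id.const_mul_atTop two_pos)
    simpa using ((tendsto_const_nhds (x := (1 : ℝ)) |>.sub h).pow (∑ i, m i)).mul_const b
  obtain ⟨A, hA, hAb⟩ := ((eventually_gt_atTop 0).and (hp.eventually (lt_mem_nhds hb))).exists
  obtain ⟨β, D, hβ, hβδ, hD, hshallow⟩ :=
    (twoRho α m).exists_le_mul_norm_add_of_exists_lt hαv hmax huniq hA.le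
  obtain ⟨c, hc, hlow⟩ := exists_mul_exp_le_ballVolume μ hv hv1 hαv
  have hp0 : 0 < (1 - exp (-(2 * A))) ^ (∑ i, m i) :=
    pow_pos (sub_pos.2 (exp_lt_one_iff.2 (by linarith))) _
  refine eventually_le_mul_of_le_pow_mul_add (finrank ℝ E) hp0 hc hε.le
    (mul_nonneg (exp_pos (β * ε + 2 * D)).le (measureReal_nonneg (μ := μ) (s := Metric.ball 0 1)))
    hβδ hlow ?_ hAb
  filter_upwards [eventually_ge_atTop ε] with T hT
  exact mul_ballVolume_add_le μ hA.le (hβ.trans hβδ.le) hβ hD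
    ((twoRho α m).le_mul_norm_of_forall_norm_le_one hmax) hshallow hε.le hT (hε.trans_le hT)

theorem tendsto_ballVolume_add_div_ballVolume [Nonempty ι] (hα : ∀ i, α i ≠ 0) {v : E}
    (hv : v ∈ interior (chamber α)) (hv1 : ‖v‖ ≤ 1)
    (hmax : ∀ t, ‖t‖ ≤ 1 → twoRho α m t ≤ twoRho α m v)
    (huniq : ∀ t, ‖t‖ ≤ 1 → twoRho α m t = twoRho α m v → t = v) {ε : ℝ} (hε : 0 < ε) :
    Tendsto (fun T => ballVolume μ α m (T + ε) / ballVolume μ α m T) atTop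
      (𝓝 (exp (twoRho α m v * ε))) := by
  have hαv : ∀ i, 0 < α i v := fun i => pos_of_mem_interior_chamber hv (hα i)
  obtain ⟨c, hc, hlow⟩ := exists_mul_exp_le_ballVolume μ hv hv1 hαv
  refine tendsto_div_of_eventually_le (hlow.mono fun T h => (mul_pos hc (exp_pos _)).trans_le h)
    (Eventually.of_forall fun T => ?_)
    fun b hb => eventually_ballVolume_add_le_mul μ hv hv1 hαv hmax huniq hε hb
  rw [mul_comm (twoRho α m v)]
  exact exp_mul_ballVolume_le μ (interior_subset hv) hv1 hε.le T

end Volume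

theorem ball_volume_growth_general
    (r : ℕ)
    (ι : Type) [Fintype ι] [Nonempty ι]
    (α : ι → (EuclideanSpace ℝ (Fin r) →ₗ[ℝ] ℝ))
    (hα : ∀ i, α i ≠ 0)
    (m : ι → ℕ)
    (aPos : Set (EuclideanSpace ℝ (Fin r)))
    (haPos : aPos = {t | ∀ i, 0 ≤ α i t})
    (ξ : EuclideanSpace ℝ (Fin r) → ℝ)
    (hξ : ∀ t, ξ t = ∏ i, Real.sinh (α i t) ^ m i)
    (δ : ℝ) (v : EuclideanSpace ℝ (Fin r))
    (hv_norm : ‖v‖ ≤ 1)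
    (hδ : δ = ∑ i, (m i : ℝ) * α i v)
    (hmax : ∀ t : EuclideanSpace ℝ (Fin r), ‖t‖ ≤ 1 → ∑ i, (m i : ℝ) * α i t ≤ δ)
    (huniq : ∀ t : EuclideanSpace ℝ (Fin r), ‖t‖ ≤ 1 →
      (∑ i, (m i : ℝ) * α i t) = δ → t = v)
    (hv_int : v ∈ interior aPos)
    (ε : ℝ) (hε : 0 < ε) :
    Tendsto (fun T : ℝ =>
        (∫ t in {t ∈ aPos | ‖t‖ < T + ε}, ξ t) /
          (∫ t in {t ∈ aPos | ‖t‖ < T}, ξ t))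
      atTop (nhds (Real.exp (δ * ε))) := by
  obtain rfl : ξ = weylDensity α m := funext hξ
  subst haPos
  simp only [← twoRho_apply] at hδ hmax huniq
  subst hδ
  exact tendsto_ballVolume_add_div_ballVolume volume hα hv_int hv_norm hmax huniq hε

/-- **Paper's Lemma 5.4 (coordinate form, via the Cartan integration formula).**
Setup as in Lemma 5.1: `Φ⁺` is a finite nonempty family of nonzero linear functionals `α i`
on `ℝ^r` with multiplicities `m i ≥ 1`; `𝔞⁺ = {t | ∀ i, α i t ≥ 0}` has nonempty interior;
`ξ t = ∏ i, sinh (α i t) ^ (m i)`; `δ = max {∑ i, m i * α i t : ‖t‖ ≤ 1}` is attained at the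
unique point `v` (the barycenter), lying in the interior of `𝔞⁺`.  Then for every `ε > 0`,
`(∫_{(𝔞⁺)_{T+ε}} ξ) / (∫_{(𝔞⁺)_T} ξ) → e^{δε}` as `T → ∞`. -/
theorem ball_volume_growth
    (r : ℕ) (hr : 1 ≤ r)
    (ι : Type) [Fintype ι] [Nonempty ι]
    (α : ι → (EuclideanSpace ℝ (Fin r) →ₗ[ℝ] ℝ))
    (hα : ∀ i, α i ≠ 0)
    (m : ι → ℕ) (hm : ∀ i, 1 ≤ m i)
    (aPos : Set (EuclideanSpace ℝ (Fin r)))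
    (haPos : aPos = {t | ∀ i, 0 ≤ α i t})
    (haPosInt : (interior aPos).Nonempty)
    (ξ : EuclideanSpace ℝ (Fin r) → ℝ)
    (hξ : ∀ t, ξ t = ∏ i, Real.sinh (α i t) ^ m i)
    (δ : ℝ) (v : EuclideanSpace ℝ (Fin r))
    (hv_norm : ‖v‖ ≤ 1)
    (hδ : δ = ∑ i, (m i : ℝ) * α i v)
    (hmax : ∀ t : EuclideanSpace ℝ (Fin r), ‖t‖ ≤ 1 → ∑ i, (m i : ℝ) * α i t ≤ δ)
    (huniq : ∀ t : EuclideanSpace ℝ (Fin r), ‖t‖ ≤ 1 →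
      (∑ i, (m i : ℝ) * α i t) = δ → t = v)
    (hv_int : v ∈ interior aPos)
    (ε : ℝ) (hε : 0 < ε) :
    Tendsto (fun T : ℝ =>
        (∫ t in {t ∈ aPos | ‖t‖ < T + ε}, ξ t) /
          (∫ t in {t ∈ aPos | ‖t‖ < T}, ξ t))
      atTop (nhds (Real.exp (δ * ε))) :=
  ball_volume_growth_general r ι α hα m aPos haPos ξ hξ δ v hv_norm hδ hmax huniq hv_int ε hε
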